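/- Let g ≥ 2 and F = (λ, f) ∈ GT. Then in Γ̂_{g,1}: (i) d^λ · (y₅^λ d^λ y₅^{-λ}) = w₄^λ, i.e. the proposed action of F respects relation (B); (ii) d^λ commutes with a₁^λ and with f(a_j², y_j) a_j^λ f(y_j, a_j²) for every 2 ≤ j ≤ 2g with j ≠ 4, i.e. the proposed action respects the commutation of d with a_j for j ≠ 4. -/

import Mathlib

/-! # Common setup: profinite groups, Ẑ, free profinite F₂, profinite completions,
the Grothendieck–Teichmüller group, braid groups and mapping class groups. -/

universe u

/-- A (topological) group is profinite if it is a compact, Hausdorff, totally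
disconnected topological group. -/
class IsProfiniteGroup (G : Type) [Group G] [TopologicalSpace G] extends
    IsTopologicalGroup G, CompactSpace G, T2Space G, TotallyDisconnectedSpace G : Prop

/-- A model of Ẑ, the profinite completion of ℤ: a profinite commutative topological
ring whose underlying additive profinite group is the free profinite group on the
single (topological) generator `1`. These properties characterize Ẑ uniquely. -/
structure ZhatModel : Type 1 where
  R : Type
  [commRing : CommRing R]
  [top : TopologicalSpace R]
  [topRing : IsTopologicalRing R]
  [cpt : CompactSpace R]
  [t2 : T2Space R]
  [td : TotallyDisconnectedSpace R]
  free : ∀ (G : Type) [Group G] [TopologicalSpace G] [IsProfiniteGroup G] (a : G),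
    ∃! φ : ContinuousMonoidHom (Multiplicative R) G,
      φ (Multiplicative.ofAdd (1 : R)) = a

attribute [instance] ZhatModel.commRing ZhatModel.top ZhatModel.topRing
  ZhatModel.cpt ZhatModel.t2 ZhatModel.td

/-- `Z.pow a l` is the profinite power `a ^ l` for `l ∈ Ẑ`: the image of `l` under
the unique continuous homomorphism `Ẑ → G` sending `1` to `a`. -/
noncomputable def ZhatModel.pow (Z : ZhatModel) {G : Type} [Group G] [TopologicalSpace G]
    [IsProfiniteGroup G] (a : G) (l : Z.R) : G :=
  (Z.free G a).exists.choose (Multiplicative.ofAdd l)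

/-- A model of the free profinite group `F̂₂` on two generators `x`, `y`. -/
structure F2Model : Type 1 where
  F : Type
  [grp : Group F]
  [top : TopologicalSpace F]
  [pro : IsProfiniteGroup F]
  x : F
  y : F
  free : ∀ (G : Type) [Group G] [TopologicalSpace G] [IsProfiniteGroup G] (a b : G),
    ∃! φ : ContinuousMonoidHom F G, φ x = a ∧ φ y = b

attribute [instance] F2Model.grp F2Model.top F2Model.pro

/-- `F2.eval f a b` is `f(a,b)`: the image of `f ∈ F̂₂` under the unique continuous
homomorphism `F̂₂ → G` with `x ↦ a`, `y ↦ b`. -/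
noncomputable def F2Model.eval (F2 : F2Model) {G : Type} [Group G] [TopologicalSpace G]
    [IsProfiniteGroup G] (f : F2.F) (a b : G) : G :=
  (F2.free G a b).exists.choose f

/-- A model of the profinite completion of a (discrete) group `B`: a profinite group
`C` together with a homomorphism `ι : B → C` such that every homomorphism from `B`
to a profinite group extends uniquely to a continuous homomorphism on `C`.  This
universal property characterizes the profinite completion uniquely. -/
structure ProfiniteCompletionModel (B : Type) [Group B] : Type 1 where
  C : Type
  [grp : Group C]
  [top : TopologicalSpace C]
  [pro : IsProfiniteGroup C]
  ι : B →* C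
  free : ∀ (H : Type) [Group H] [TopologicalSpace H] [IsProfiniteGroup H] (ψ : B →* H),
    ∃! φ : ContinuousMonoidHom C H, ∀ b, φ (ι b) = ψ b

attribute [instance] ProfiniteCompletionModel.grp ProfiniteCompletionModel.top
  ProfiniteCompletionModel.pro

/-! ## Generic words in a group -/

section Words

variable {G : Type*} [Group G]

/-- `genY b k = b (k-1) ⋯ b 2 (b 1)² b 2 ⋯ b (k-1)` (equal to `1` for `k ≤ 1`). -/
def genY (b : ℕ → G) : ℕ → G
  | 0 => 1
  | 1 => 1
  | 2 => b 1 * b 1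
  | (k+3) => b (k+2) * genY b (k+2) * b (k+2)

/-- `genProd b k = b 1 * b 2 * ⋯ * b k`. -/
def genProd (b : ℕ → G) : ℕ → G
  | 0 => 1
  | (k+1) => genProd b k * b (k+1)

/-- `genW b k = (b 1 ⋯ b (k-1))^k`. -/
def genW (b : ℕ → G) (k : ℕ) : G := (genProd b (k-1))^k

end Words

/-! ## Braid groups -/

/-- Braid relations on `n` generators (indexed by `Fin n`, where index `i`
stands for `σ_{i+1}`). -/
def braidRels (n : ℕ) : Set (FreeGroup (Fin n)) :=
  {r | (∃ i j : Fin n, (i : ℕ) + 1 = (j : ℕ) ∧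
          r = FreeGroup.of i * FreeGroup.of j * FreeGroup.of i *
              (FreeGroup.of j * FreeGroup.of i * FreeGroup.of j)⁻¹) ∨
       (∃ i j : Fin n, (i : ℕ) + 2 ≤ (j : ℕ) ∧
          r = FreeGroup.of i * FreeGroup.of j * (FreeGroup.of j * FreeGroup.of i)⁻¹)}

/-- The Artin braid group `B_n` on `n` strands, with the `n-1` generators
`σ_1, …, σ_{n-1}`. -/
abbrev BraidGroup (n : ℕ) : Type := PresentedGroup (braidRels (n-1))

/-- The generator `σ_i` of the braid group `B_n` (junk value `1` when `i` is
out of range). -/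
def σB (n : ℕ) (i : ℕ) : BraidGroup n :=
  if h : 1 ≤ i ∧ i < n then PresentedGroup.of (⟨i - 1, by omega⟩ : Fin (n-1)) else 1

/-- `η_i = σ_{i-1} ⋯ σ₂ σ₁² σ₂ ⋯ σ_{i-1}` in `B_n`. -/
def ηB (n : ℕ) (i : ℕ) : BraidGroup n := genY (σB n) i

/-- `ω_i = (σ₁ ⋯ σ_{i-1})^i` in `B_n`. -/
def ωB (n : ℕ) (i : ℕ) : BraidGroup n := genW (σB n) i

/-! ## The Grothendieck-Teichmüller group -/

/-- The standard generators of the pure braid group `P₄ ⊂ B₄`, in the order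
`x₁₂, x₁₃, x₁₄, x₂₃, x₂₄, x₃₄`. -/
def xGen : Fin 6 → BraidGroup 4 :=
  ![(σB 4 1)^2,
    σB 4 2 * (σB 4 1)^2 * (σB 4 2)⁻¹,
    σB 4 3 * σB 4 2 * (σB 4 1)^2 * (σB 4 2)⁻¹ * (σB 4 3)⁻¹,
    (σB 4 2)^2,
    σB 4 3 * (σB 4 2)^2 * (σB 4 3)⁻¹,
    (σB 4 3)^2]

/-- The pure braid group `P₄` as a subgroup of `B₄`. -/
def P4 : Subgroup (BraidGroup 4) := Subgroup.closure (Set.range xGen)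

/-- The generators `x_{ij}` as elements of `P₄`. -/
def xP (k : Fin 6) : P4 := ⟨xGen k, Subgroup.subset_closure (Set.mem_range_self k)⟩

/-- The pair `(l, f)` belongs to the Grothendieck–Teichmüller group `GT`:
`l ∈ Ẑ×`, `l - 1 ∈ 2Ẑ`, `f` lies in the closure of the commutator subgroup of
`F̂₂` and the relations (I), (II), (III) hold. -/
def IsGT (Z : ZhatModel) (F2 : F2Model) (l : Z.R) (f : F2.F) : Prop :=
  IsUnit l ∧ (∃ m : Z.R, l - 1 = 2 * m) ∧
  f ∈ (commutator F2.F).topologicalClosure ∧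
  -- (I)
  F2.eval f F2.x F2.y * F2.eval f F2.y F2.x = 1 ∧
  -- (II)
  (∀ m : Z.R, l - 1 = 2 * m →
    F2.eval f (F2.x * F2.y)⁻¹ F2.x * Z.pow ((F2.x * F2.y)⁻¹) m *
      F2.eval f F2.y ((F2.x * F2.y)⁻¹) * Z.pow F2.y m *
      F2.eval f F2.x F2.y * Z.pow F2.x m = 1) ∧
  -- (III), in (any model of) the profinite completion of the pure braid group P₄
  (∀ CP : ProfiniteCompletionModel P4,
    F2.eval f (CP.ι (xP 0)) (CP.ι (xP 3) * CP.ι (xP 4)) *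
      F2.eval f (CP.ι (xP 1) * CP.ι (xP 3)) (CP.ι (xP 5)) =
    F2.eval f (CP.ι (xP 3)) (CP.ι (xP 5)) *
      F2.eval f (CP.ι (xP 0) * CP.ι (xP 1)) (CP.ι (xP 4) * CP.ι (xP 5)) *
      F2.eval f (CP.ι (xP 0)) (CP.ι (xP 3)))
/-! ## Words for the mapping class group -/

section MCGWords

variable {G : Type*} [Group G] (d : G) (a : ℕ → G)

/-- `t_k = a_{2k} a_{2k-1} a_{2k+1} a_{2k}`. -/
def tA (k : ℕ) : G := a (2*k) * a (2*k - 1) * a (2*k + 1) * a (2*k)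

/-- `d' = y₅ d y₅⁻¹`. -/
def dpA : G := genY a 5 * d * (genY a 5)⁻¹

/-- `d₃ = (t₁⁻¹t₂⁻¹ d t₂t₁)(t₂⁻¹ d t₂) d a₁⁻¹ a₃⁻¹ a₅⁻¹`. -/
def d3A : G :=
  ((tA a 1)⁻¹ * (tA a 2)⁻¹ * d * tA a 2 * tA a 1) * ((tA a 2)⁻¹ * d * tA a 2) * d *
    (a 1)⁻¹ * (a 3)⁻¹ * (a 5)⁻¹

/-- The element `t₂t₁t₃t₂`. -/
def tfour : G := tA a 2 * tA a 1 * tA a 3 * tA a 2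

/-- The relator expressing relation (C'): `d'` commutes with `(t₂t₁t₃t₂) d (t₂t₁t₃t₂)⁻¹`. -/
def relCpA : G :=
  dpA d a * (tfour a * d * (tfour a)⁻¹) * (dpA d a)⁻¹ * (tfour a * d * (tfour a)⁻¹)⁻¹

/-- `v₁ = d'`, `v_i = (t_{i-1} t_i) v_{i-1} (t_{i-1} t_i)⁻¹`. -/
def vA : ℕ → G
  | 0 => 1
  | 1 => dpA d a
  | (i+2) => (tA a (i+1) * tA a (i+2)) * vA (i+1) * (tA a (i+1) * tA a (i+2))⁻¹

/-- `u_i = a_{2i} a_{2i+1} a_{2i+2} v_i (a_{2i+2} a_{2i+1} a_{2i} a_{2i-1})⁻¹`. -/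
def uA (i : ℕ) : G :=
  a (2*i) * a (2*i+1) * a (2*i+2) * vA d a i *
    (a (2*i+2) * a (2*i+1) * a (2*i) * a (2*i - 1))⁻¹

/-- `d_g = (u₁⋯u_{g-1})⁻¹ a₁ (u₁⋯u_{g-1})`. -/
def dgA (g : ℕ) : G :=
  (genProd (uA d a) (g-1))⁻¹ * a 1 * genProd (uA d a) (g-1)

/-- The relator of relation (D): `y_{2g+1} d_g y_{2g+1}⁻¹ = d_g`. -/
def relDA (g : ℕ) : G :=
  genY a (2*g+1) * dgA d a g * (genY a (2*g+1))⁻¹ * (dgA d a g)⁻¹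

/-- `genProd2 b k = b 2 * b 3 * ⋯ * b k`. -/
def genProd2 (b : ℕ → G) : ℕ → G
  | 0 => 1
  | 1 => 1
  | (k+2) => genProd2 b (k+1) * b (k+2)

/-- `TTA a i = (t₂⋯t_i)·(t₁⋯t_{i-1})`. -/
def TTA (i : ℕ) : G := genProd2 (tA a) i * genProd (tA a) (i-1)

/-- The sequence `d₁ = a₁`, `d₂ = d`,
`d_{i+1} = a_{2i+1}⁻¹ a_{2i-1}⁻¹ d_{i-1}⁻¹ g_{2,i} g_{1,i} d_i`
where `g_{1,i} = t_i⁻¹ d_i t_i` and `g_{2,i} = (t₂⋯t_i t₁⋯t_{i-1})⁻¹ d (t₂⋯t_i t₁⋯t_{i-1})`. -/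
def dSeq : ℕ → G
  | 0 => 1
  | 1 => a 1
  | 2 => d
  | (i+3) =>
    (a (2*(i+2)+1))⁻¹ * (a (2*(i+2) - 1))⁻¹ * (dSeq (i+1))⁻¹ *
      ((TTA a (i+2))⁻¹ * d * TTA a (i+2)) *
      ((tA a (i+2))⁻¹ * dSeq (i+2) * tA a (i+2)) * dSeq (i+2)

/-- `g_{1,i} = t_i⁻¹ d_i t_i`. -/
def g1A (i : ℕ) : G := (tA a i)⁻¹ * dSeq d a i * tA a i

/-- `g_{2,i} = (t₂⋯t_i · t₁⋯t_{i-1})⁻¹ d (t₂⋯t_i · t₁⋯t_{i-1})`. -/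
def g2A (i : ℕ) : G := (TTA a i)⁻¹ * d * TTA a i

/-- `d′_i = y_{2i+1} d_i y_{2i+1}⁻¹`. -/
def dpSeq (i : ℕ) : G := genY a (2*i+1) * dSeq d a i * (genY a (2*i+1))⁻¹

/-- `g′_{1,i} = t_i⁻¹ d′_i t_i`. -/
def g1pA (i : ℕ) : G := (tA a i)⁻¹ * dpSeq d a i * tA a i

/-- `g′_{2,i} = (t₂⋯t_i · t₁⋯t_{i-1})⁻¹ d′ (t₂⋯t_i · t₁⋯t_{i-1})`. -/
def g2pA (i : ℕ) : G := (TTA a i)⁻¹ * dpA d a * TTA a i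

/-- `W_k = (t₁⋯t_{k-1})^k`. -/
def WWA (k : ℕ) : G := genW (tA a) k

/-- `Y_k = t_{k-1}⋯t₂t₁²t₂⋯t_{k-1}`. -/
def YYA (k : ℕ) : G := genY (tA a) k

end MCGWords

/-! ## The Wajnryb presentation of the mapping class group `Γ_{g,1}` -/

/-- The free-group generator `d`. -/
def dF (g : ℕ) : FreeGroup (Fin (2*g+1)) := FreeGroup.of ⟨0, by omega⟩

/-- The free-group generators `a_i`, `1 ≤ i ≤ 2g` (junk value `1` out of range). -/
def aF (g : ℕ) (i : ℕ) : FreeGroup (Fin (2*g+1)) :=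
  if h : 1 ≤ i ∧ i ≤ 2*g then FreeGroup.of ⟨i, by omega⟩ else 1

/-- The relators of the Wajnryb presentation of `Γ_{g,1}`: relations (A), (B),
(C) (when `g ≥ 3`) and (C') (when `g ≥ 4`). -/
def mcgRels (g : ℕ) : Set (FreeGroup (Fin (2*g+1))) :=
  {r | (∃ i : ℕ, 1 ≤ i ∧ i + 1 ≤ 2*g ∧
          r = aF g i * aF g (i+1) * aF g i * (aF g (i+1) * aF g i * aF g (i+1))⁻¹) ∨
       (∃ i j : ℕ, 1 ≤ i ∧ j ≤ 2*g ∧ i + 2 ≤ j ∧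
          r = aF g i * aF g j * (aF g j * aF g i)⁻¹) ∨
       (r = dF g * aF g 4 * dF g * (aF g 4 * dF g * aF g 4)⁻¹) ∨
       (∃ j : ℕ, 1 ≤ j ∧ j ≤ 2*g ∧ j ≠ 4 ∧
          r = dF g * aF g j * (aF g j * dF g)⁻¹) ∨
       (r = dF g * dpA (dF g) (aF g) * ((aF g 1 * aF g 2 * aF g 3)^4)⁻¹) ∨
       (3 ≤ g ∧ r = d3A (dF g) (aF g) * aF g 6 * d3A (dF g) (aF g) *
          (aF g 6 * d3A (dF g) (aF g) * aF g 6)⁻¹) ∨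
       (4 ≤ g ∧ r = relCpA (dF g) (aF g))}

/-- The mapping class group `Γ_{g,1}` of a genus-`g` surface with one marked point,
via its Wajnryb presentation. -/
abbrev Gamma1 (g : ℕ) : Type := PresentedGroup (mcgRels g)

/-- The generator `d` of `Γ_{g,1}`. -/
def dM (g : ℕ) : Gamma1 g := PresentedGroup.of ⟨0, by omega⟩

/-- The generators `a_i` of `Γ_{g,1}` (junk value `1` out of range). -/
def aM (g : ℕ) (i : ℕ) : Gamma1 g :=
  if h : 1 ≤ i ∧ i ≤ 2*g then PresentedGroup.of ⟨i, by omega⟩ else 1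

/-- The mapping class group `Γ_{g,0}` of a closed genus-`g` surface, obtained from the
Wajnryb presentation of `Γ_{g,1}` by adding the single relation (D). -/
abbrev Gamma0 (g : ℕ) : Type :=
  PresentedGroup (mcgRels g ∪ {relDA (dF g) (aF g) g})

/-- The generator `d` of `Γ_{g,0}`. -/
def dM0 (g : ℕ) : Gamma0 g := PresentedGroup.of ⟨0, by omega⟩

/-- The generators `a_i` of `Γ_{g,0}` (junk value `1` out of range). -/
def aM0 (g : ℕ) (i : ℕ) : Gamma0 g :=
  if h : 1 ≤ i ∧ i ≤ 2*g then PresentedGroup.of ⟨i, by omega⟩ else 1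


/-! Write `D`, `U`, `w` for the images of `d`, `y₅`, `w₄` in `Γ̂_{g,1}`. Then `w` commutes with `D`
(as `d` commutes with `a₁, a₂, a₃`) and with `U` (a braid identity), so relation (B),
`U D U⁻¹ = D⁻¹ w`, shows that `U²` commutes with `D`. For odd `λ = 2m + 1` we get
`U^λ = U (U²)^m`, hence `U^λ D^λ U^{-λ} = (U D U⁻¹)^λ = (D⁻¹ w)^λ`, and (i) follows since `D`
and `D⁻¹ w` commute.

For (ii) with `j ≤ 3`, `d` commutes with `a_j` and `y_j`, hence with everything they generate.
For `j ≥ 5`, `y_j` conjugates `d` exactly as `y₅` does. Then `z = D⁻² w` is inverted by `y_j` and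
centralized by `D` and `a_j`, and conjugation by `D^λ` multiplies `y_j` by an element of the closed
subgroup `K` generated by `z`. Since `a_j²` and `y_j` normalize `K`, this changes `f(a_j², y_j)`
only by a factor in `K`, which commutes with `a_j^λ`; relation (I) rewrites `f(y_j, a_j²)` as
`f(a_j², y_j)⁻¹`, so the two factors cancel. -/

theorem IsProfiniteGroup.of_isClosed {G : Type} [Group G] [TopologicalSpace G]
    [IsProfiniteGroup G] {K : Subgroup G} (hK : IsClosed (K : Set G)) : IsProfiniteGroup K :=
  have : CompactSpace K := isCompact_iff_compactSpace.mp hK.isCompact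
  {}

def ContinuousMonoidHom.conj {G : Type} [Group G] [TopologicalSpace G] [IsTopologicalGroup G]
    (g : G) : ContinuousMonoidHom G G :=
  ⟨MulAut.conj g, IsTopologicalGroup.continuous_conj g⟩

namespace ZhatModel

variable (Z : ZhatModel) {G H : Type} [Group G] [TopologicalSpace G] [IsProfiniteGroup G]
  [Group H] [TopologicalSpace H] [IsProfiniteGroup H] {a b : G}

noncomputable def powHom (a : G) : ContinuousMonoidHom (Multiplicative Z.R) G :=
  (Z.free G a).exists.choose

theorem powHom_ofAdd (a : G) (t : Z.R) : Z.powHom a (.ofAdd t) = Z.pow a t := rfl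

theorem pow_eq_of_hom (ψ : ContinuousMonoidHom (Multiplicative Z.R) G)
    (hψ : ψ (.ofAdd 1) = a) (t : Z.R) : Z.pow a t = ψ (.ofAdd t) := by
  rw [← powHom_ofAdd,
    show Z.powHom a = ψ from (Z.free G a).unique (Z.free G a).exists.choose_spec hψ]

theorem pow_one (a : G) : Z.pow a 1 = a := (Z.free G a).exists.choose_spec

theorem pow_add (a : G) (s t : Z.R) : Z.pow a (s + t) = Z.pow a s * Z.pow a t :=
  map_mul (Z.powHom a) (.ofAdd s) (.ofAdd t)

theorem pow_neg (a : G) (t : Z.R) : Z.pow a (-t) = (Z.pow a t)⁻¹ :=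
  map_inv (Z.powHom a) (.ofAdd t)

theorem continuous_pow (a : G) : Continuous fun t : Z.R => Z.pow a t :=
  (Z.powHom a).continuous.comp continuous_ofAdd

theorem map_pow (φ : ContinuousMonoidHom G H) (a : G) (t : Z.R) :
    φ (Z.pow a t) = Z.pow (φ a) t :=
  (Z.pow_eq_of_hom (φ.comp (Z.powHom a)) (congrArg φ (Z.pow_one a)) t).symm

theorem conj_pow (g a : G) (t : Z.R) : g * Z.pow a t * g⁻¹ = Z.pow (g * a * g⁻¹) t :=
  Z.map_pow (.conj g) a t

theorem commute_pow_left (h : Commute a b) (t : Z.R) : Commute (Z.pow a t) b := by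
  have hconj : b * Z.pow a t * b⁻¹ = Z.pow a t := by
    rw [conj_pow, h.symm.eq, mul_inv_cancel_right]
  exact (mul_inv_eq_iff_eq_mul.mp hconj).symm

theorem commute_pow_pow (h : Commute a b) (s t : Z.R) : Commute (Z.pow a s) (Z.pow b t) :=
  Z.commute_pow_left (Z.commute_pow_left h.symm t).symm s

theorem pow_mul_of_commute (h : Commute a b) (t : Z.R) :
    Z.pow (a * b) t = Z.pow a t * Z.pow b t := by
  let ψ : ContinuousMonoidHom (Multiplicative Z.R) G :=
    ⟨MonoidHom.mk' (fun s => Z.pow a s.toAdd * Z.pow b s.toAdd) fun s s' => by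
      simp only [toAdd_mul, pow_add]
      exact (Z.commute_pow_pow h s'.toAdd s.toAdd).mul_mul_mul_comm _ _,
     ((Z.continuous_pow a).mul (Z.continuous_pow b)).comp continuous_toAdd⟩
  exact Z.pow_eq_of_hom ψ (by show Z.pow a 1 * Z.pow b 1 = a * b; rw [Z.pow_one, Z.pow_one]) t

theorem pow_mul (a : G) (s t : Z.R) : Z.pow a (s * t) = Z.pow (Z.pow a s) t := by
  let ψ : ContinuousMonoidHom (Multiplicative Z.R) G :=
    ⟨MonoidHom.mk' (fun t => Z.pow a (s * t.toAdd)) fun t t' => by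
      simp only [toAdd_mul, mul_add, pow_add],
     (Z.continuous_pow a).comp ((continuous_const_mul s).comp continuous_toAdd)⟩
  exact (Z.pow_eq_of_hom ψ (by show Z.pow a (s * 1) = _; rw [mul_one]) t).symm

theorem pow_odd {l m : Z.R} (hl : l = 2 * m + 1) (a : G) :
    Z.pow a l = a * Z.pow (a * a) m := by
  rw [hl, add_comm, pow_add, pow_mul, pow_one, show (2 : Z.R) = 1 + 1 by norm_num, pow_add,
    pow_one]

theorem pow_mem {K : Subgroup G} (hK : IsClosed (K : Set G)) (ha : a ∈ K) (t : Z.R) :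
    Z.pow a t ∈ K := by
  have := IsProfiniteGroup.of_isClosed hK
  exact Z.map_pow ⟨K.subtype, continuous_subtype_val⟩ ⟨a, ha⟩ t ▸ (Z.pow (⟨a, ha⟩ : K) t).2

end ZhatModel

namespace F2Model

variable (F2 : F2Model) {G H : Type} [Group G] [TopologicalSpace G] [IsProfiniteGroup G]
  [Group H] [TopologicalSpace H] [IsProfiniteGroup H]

noncomputable def evalHom (a b : G) : ContinuousMonoidHom F2.F G := (F2.free G a b).exists.choose

theorem evalHom_apply (a b : G) (w : F2.F) : F2.evalHom a b w = F2.eval w a b := rfl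

theorem eval_eq_of_hom {a b : G} (ψ : ContinuousMonoidHom F2.F G) (hx : ψ F2.x = a)
    (hy : ψ F2.y = b) (w : F2.F) : F2.eval w a b = ψ w := by
  rw [← evalHom_apply, show F2.evalHom a b = ψ from
    (F2.free G a b).unique (F2.free G a b).exists.choose_spec ⟨hx, hy⟩]

theorem eval_x (a b : G) : F2.eval F2.x a b = a := (F2.free G a b).exists.choose_spec.1

theorem eval_y (a b : G) : F2.eval F2.y a b = b := (F2.free G a b).exists.choose_spec.2

theorem eval_x_y (w : F2.F) : F2.eval w F2.x F2.y = w :=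
  F2.eval_eq_of_hom (.id F2.F) rfl rfl w

theorem map_eval (φ : ContinuousMonoidHom G H) (w : F2.F) (a b : G) :
    φ (F2.eval w a b) = F2.eval w (φ a) (φ b) :=
  (F2.eval_eq_of_hom (φ.comp (F2.evalHom a b)) (congrArg φ (F2.eval_x a b))
    (congrArg φ (F2.eval_y a b)) w).symm

theorem conj_eval (g : G) (w : F2.F) (a b : G) :
    g * F2.eval w a b * g⁻¹ = F2.eval w (g * a * g⁻¹) (g * b * g⁻¹) :=
  F2.map_eval (.conj g) w a b

theorem eval_mem {K : Subgroup G} (hK : IsClosed (K : Set G)) {a b : G} (ha : a ∈ K)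
    (hb : b ∈ K) (w : F2.F) : F2.eval w a b ∈ K := by
  have := IsProfiniteGroup.of_isClosed hK
  exact F2.map_eval ⟨K.subtype, continuous_subtype_val⟩ w ⟨a, ha⟩ ⟨b, hb⟩ ▸
    (F2.eval w (⟨a, ha⟩ : K) ⟨b, hb⟩).2

theorem mem_of_isClosed {S : Subgroup F2.F} (hS : IsClosed (S : Set F2.F)) (hx : F2.x ∈ S)
    (hy : F2.y ∈ S) (w : F2.F) : w ∈ S :=
  F2.eval_x_y w ▸ F2.eval_mem hS hx hy w

theorem eval_swap_of_mul_eq_one {f : F2.F}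
    (hI : F2.eval f F2.x F2.y * F2.eval f F2.y F2.x = 1) (a b : G) :
    F2.eval f b a = (F2.eval f a b)⁻¹ := by
  have h := congrArg (F2.evalHom a b) hI
  rw [map_mul, map_one, F2.eval_x_y, F2.map_eval] at h
  simp only [evalHom_apply, eval_x, eval_y] at h
  exact eq_inv_of_mul_eq_one_right h

theorem commute_eval {d a b : G} (ha : Commute d a) (hb : Commute d b) (w : F2.F) :
    Commute d (F2.eval w a b) := by
  have hC : IsClosed (Subgroup.centralizer {d} : Set G) := Set.isClosed_centralizer _
  exact (Subgroup.mem_centralizer_singleton_iff.mp (F2.eval_mem hC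
    (Subgroup.mem_centralizer_singleton_iff.mpr ha.symm.eq)
    (Subgroup.mem_centralizer_singleton_iff.mpr hb.symm.eq) w)).symm

end F2Model

namespace Subgroup

theorem mem_normalizer_iff_conj_mem {G : Type*} [Group G] {K : Subgroup G} {g : G} :
    g ∈ normalizer (K : Set G) ↔
      (∀ h ∈ K, g * h * g⁻¹ ∈ K) ∧ ∀ h ∈ K, g⁻¹ * h * g ∈ K := by
  refine ⟨fun hg => ⟨fun h => (mem_normalizer_iff.mp hg h).mp,
    fun h => (mem_normalizer_iff''.mp hg h).mp⟩, fun ⟨h₁, h₂⟩ => mem_normalizer_iff.mpr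
    fun h => ⟨h₁ h, fun hh => ?_⟩⟩
  simpa [mul_assoc] using h₂ _ hh

variable {G : Type} [Group G] [TopologicalSpace G] [IsTopologicalGroup G]

theorem isClosed_normalizer {K : Subgroup G} (hK : IsClosed (K : Set G)) :
    IsClosed (normalizer (K : Set G) : Set G) := by
  have : (normalizer (K : Set G) : Set G) =
      (⋂ h ∈ K, (fun g => g * h * g⁻¹) ⁻¹' K) ∩ ⋂ h ∈ K, (fun g => g⁻¹ * h * g) ⁻¹' K := by
    ext g
    simp [mem_normalizer_iff_conj_mem]
  rw [this]
  exact (isClosed_biInter fun h _ => hK.preimage (by fun_prop)).inter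
    (isClosed_biInter fun h _ => hK.preimage (by fun_prop))

theorem normalizer_le_normalizer_topologicalClosure (K : Subgroup G) :
    normalizer (K : Set G) ≤ normalizer (K.topologicalClosure : Set G) := by
  have hconj {g : G} (hg : g ∈ normalizer (K : Set G)) {h : G}
      (hh : h ∈ K.topologicalClosure) : g * h * g⁻¹ ∈ K.topologicalClosure :=
    map_mem_closure (f := fun h => g * h * g⁻¹) (IsTopologicalGroup.continuous_conj g) hh
      fun k hk => (mem_normalizer_iff_conj_mem.mp hg).1 k hk
  intro g hg
  refine mem_normalizer_iff_conj_mem.mpr ⟨fun h hh => hconj hg hh, fun h hh => ?_⟩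
  simpa using hconj (inv_mem hg) hh

theorem mem_normalizer_topologicalClosure_zpowers {g z : G}
    (h : zpowers (g * z * g⁻¹) = zpowers z) :
    g ∈ normalizer ((zpowers z).topologicalClosure : Set G) :=
  normalizer_le_normalizer_topologicalClosure _ <|
    mem_normalizer_iff_map_conj_eq.mpr (by rw [MonoidHom.map_zpowers]; exact h)

end Subgroup

namespace F2Model

open Subgroup

variable (F2 : F2Model) {G : Type} [Group G] [TopologicalSpace G] [IsProfiniteGroup G]
  {K : Subgroup G}

/-- The words `v` with `v(a, ζ b) v(a, b)⁻¹ ∈ K` form a closed subgroup containing `x` and `y`. -/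
theorem eval_mul_inv_mem (hK : IsClosed (K : Set G)) {a b ζ : G}
    (ha : a ∈ normalizer (K : Set G)) (hb : b ∈ normalizer (K : Set G)) (hζ : ζ ∈ K)
    (w : F2.F) : F2.eval w a (ζ * b) * (F2.eval w a b)⁻¹ ∈ K := by
  have hN (v : F2.F) : F2.eval v a b ∈ normalizer (K : Set G) :=
    F2.eval_mem (isClosed_normalizer hK) ha hb v
  let S : Subgroup F2.F :=
    { carrier := {v | F2.evalHom a (ζ * b) v * (F2.evalHom a b v)⁻¹ ∈ K}
      one_mem' := by simp [K.one_mem]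
      mul_mem' := fun {v v'} hv hv' => by
        have h := K.mul_mem hv ((mem_normalizer_iff_conj_mem.mp (hN v)).1 _ hv')
        show F2.evalHom a (ζ * b) (v * v') * (F2.evalHom a b (v * v'))⁻¹ ∈ K
        simp only [map_mul, evalHom_apply] at h ⊢
        convert h using 1
        group
      inv_mem' := fun {v} hv => by
        have h := (mem_normalizer_iff_conj_mem.mp (hN v)).2 _ (K.inv_mem hv)
        show F2.evalHom a (ζ * b) v⁻¹ * (F2.evalHom a b v⁻¹)⁻¹ ∈ K
        simp only [map_inv, evalHom_apply] at h ⊢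
        convert h using 1
        group }
  refine F2.mem_of_isClosed (S := S) (hK.preimage (by fun_prop)) ?_ ?_ w
  · simp [S, evalHom_apply, eval_x, K.one_mem]
  · simpa [S, evalHom_apply, eval_y] using hζ

theorem commute_conj_eval (hK : IsClosed (K : Set G)) {a b c q ζ : G}
    (ha : a ∈ normalizer (K : Set G)) (hb : b ∈ normalizer (K : Set G)) (hζ : ζ ∈ K)
    (hqa : Commute q a) (hqb : q * b * q⁻¹ = ζ * b) (hqc : Commute q c)
    (hc : ∀ k ∈ K, Commute k c) (w : F2.F) :
    Commute q (F2.eval w a b * c * (F2.eval w a b)⁻¹) := by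
  set e := F2.eval w a b
  set κ := e⁻¹ * (F2.eval w a (ζ * b) * e⁻¹) * e
  have hκ : κ ∈ K :=
    (mem_normalizer_iff_conj_mem.mp (F2.eval_mem (isClosed_normalizer hK) ha hb w)).2 _
      (F2.eval_mul_inv_mem hK ha hb hζ w)
  have hqe : q * e * q⁻¹ = e * κ := by
    rw [F2.conj_eval, hqa.eq, mul_inv_cancel_right, hqb]
    simp only [κ]
    group
  have hqc' : q * c * q⁻¹ = c := by rw [hqc.eq, mul_inv_cancel_right]
  refine mul_inv_eq_iff_eq_mul.mp ?_
  calc q * (e * c * e⁻¹) * q⁻¹ = (q * e * q⁻¹) * (q * c * q⁻¹) * (q * e * q⁻¹)⁻¹ := by group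
    _ = e * (κ * c * κ⁻¹) * e⁻¹ := by rw [hqe, hqc']; group
    _ = e * c * e⁻¹ := by rw [(hc κ hκ).eq, mul_inv_cancel_right]

end F2Model

/-- `(σ₁σ₂σ₃)⁴ · y₅` is the full twist `(σ₁σ₂σ₃σ₄)⁵`, which is central. -/
theorem commute_fullTwist_four_genY_five {H : Type*} [Group H] {s₁ s₂ s₃ s₄ : H}
    (h₁₂ : s₁ * s₂ * s₁ = s₂ * s₁ * s₂) (h₂₃ : s₂ * s₃ * s₂ = s₃ * s₂ * s₃)
    (h₃₄ : s₃ * s₄ * s₃ = s₄ * s₃ * s₄) (c₁₃ : Commute s₁ s₃) (c₁₄ : Commute s₁ s₄)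
    (c₂₄ : Commute s₂ s₄) :
    Commute ((s₁ * s₂ * s₃) ^ 4) (s₄ * (s₃ * (s₂ * (s₁ * s₁) * s₂) * s₃) * s₄) := by
  obtain ⟨c₃, hc₃⟩ : ∃ c₃, c₃ = s₁ * s₂ * s₃ := ⟨_, rfl⟩
  obtain ⟨c, hc⟩ : ∃ c, c = c₃ * s₄ := ⟨_, rfl⟩
  have B₁₂ : SemiconjBy (s₁ * s₂) s₁ s₂ := h₁₂.trans (mul_assoc _ _ _)
  have B₂₃ : SemiconjBy (s₂ * s₃) s₂ s₃ := h₂₃.trans (mul_assoc _ _ _)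
  have B₃₄ : SemiconjBy (s₃ * s₄) s₃ s₄ := h₃₄.trans (mul_assoc _ _ _)
  have A₁ : SemiconjBy c s₁ s₂ := by
    simpa only [hc, hc₃, mul_assoc] using B₁₂.mul_left (c₁₃.symm.mul_left c₁₄.symm)
  have A₂ : SemiconjBy c s₂ s₃ := by
    simpa only [hc, hc₃, mul_assoc] using (SemiconjBy.mul_left c₁₃ B₂₃).mul_left c₂₄.symm
  have A₃ : SemiconjBy c s₃ s₄ := by
    simpa only [hc, hc₃, mul_assoc] using SemiconjBy.mul_left (c₁₄.mul_left c₂₄) B₃₄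
  have E : SemiconjBy (c * c) s₄ s₁ := by
    have P : SemiconjBy (s₁ * s₂ * s₁) s₂ s₁ := by
      unfold SemiconjBy; nth_rw 2 [h₁₂]; simp only [mul_assoc]
    have Q : SemiconjBy (s₃ * s₂) s₃ s₂ := h₂₃.symm.trans (mul_assoc _ _ _)
    have R : SemiconjBy (s₄ * s₃ * s₄) s₄ s₃ := by
      unfold SemiconjBy; nth_rw 1 [← h₃₄]; simp only [mul_assoc]
    have hcc : c * c = s₁ * s₂ * s₁ * (s₃ * s₂) * (s₄ * s₃ * s₄) := by
      simp only [hc, hc₃, mul_assoc, c₁₄.symm.left_comm, c₁₃.symm.left_comm,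
        c₂₄.symm.left_comm]
    rw [hcc]
    exact (P.mul_left Q).mul_left R
  have hcent : Commute (c ^ 5) c₃ := by
    have e₁ : c ^ 5 = c * c * (c * (c * c)) := by
      simp only [pow_succ, pow_zero, one_mul, mul_assoc]
    have e₂ : c ^ 5 = c * (c * c * (c * c)) := by
      simp only [pow_succ, pow_zero, one_mul, mul_assoc]
    have e₃ : c ^ 5 = c * (c * (c * c * c)) := by
      simp only [pow_succ, pow_zero, one_mul, mul_assoc]
    rw [hc₃]
    refine ((?_ : Commute _ s₁).mul_right (?_ : Commute _ s₂)).mul_right (?_ : Commute _ s₃)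
    · rw [e₁]; exact E.mul_left (A₃.mul_left (A₂.mul_left A₁))
    · rw [e₂]; exact A₁.mul_left (E.mul_left (A₃.mul_left A₂))
    · rw [e₃]; exact A₂.mul_left (A₁.mul_left (E.mul_left A₃))
  have step {X Y : H} (h : SemiconjBy c X Y) (k : ℕ) :
      c₃ ^ k * Y * c = c₃ ^ (k + 1) * (s₄ * X) := by
    rw [mul_assoc, ← h.eq, hc, pow_succ]; simp only [mul_assoc]
  have hc₅ : c ^ 5 = c₃ ^ 4 * (s₄ * (s₃ * (s₂ * (s₁ * s₁) * s₂) * s₃) * s₄) :=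
    calc c ^ 5 = c₃ ^ 1 * s₄ * c * c * c * c := by
          rw [pow_one, ← hc]; simp only [pow_succ, pow_zero, one_mul]
      _ = c₃ ^ 4 * (s₄ * (s₃ * (s₂ * s₁))) * c := by
          rw [step A₃, step (A₃.mul_right A₂), step (A₃.mul_right (A₂.mul_right A₁))]
      _ = _ := by rw [hc, hc₃]; simp only [mul_assoc]
  rw [← hc₃, show s₄ * (s₃ * (s₂ * (s₁ * s₁) * s₂) * s₃) * s₄ = (c₃ ^ 4)⁻¹ * c ^ 5 by
    rw [hc₅]; group]
  exact (Commute.refl _).inv_right.mul_right (hcent.symm.pow_left 4)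

section Words

variable {G : Type*} [Group G] {x : G} {b : ℕ → G}

theorem genY_succ (b : ℕ → G) {k : ℕ} (hk : 2 ≤ k) :
    genY b (k + 1) = b k * genY b k * b k := by
  obtain ⟨k, rfl⟩ := Nat.exists_eq_add_of_le' hk
  rfl

theorem genY_five (b : ℕ → G) :
    genY b 5 = b 4 * (b 3 * (b 2 * (b 1 * b 1) * b 2) * b 3) * b 4 :=
  rfl

theorem genW_four (b : ℕ → G) : genW b 4 = (b 1 * b 2 * b 3) ^ 4 := by
  simp [genW, genProd]

theorem Commute.genY_right {k : ℕ} (h : ∀ i, 1 ≤ i → i < k → Commute x (b i)) :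
    Commute x (genY b k) := by
  induction k with
  | zero => exact Commute.one_right x
  | succ k ih =>
    rcases Nat.lt_or_ge k 2 with hk | hk
    · interval_cases k
      · exact Commute.one_right x
      · exact (h 1 le_rfl one_lt_two).mul_right (h 1 le_rfl one_lt_two)
    · rw [genY_succ b hk]
      have hbk := h k (by omega) (Nat.lt_succ_self k)
      exact (hbk.mul_right (ih fun i h₁ h₂ => h i h₁ (by omega))).mul_right hbk

theorem Commute.genW_four_right (h : ∀ i, 1 ≤ i → i ≤ 3 → Commute x (b i)) :
    Commute x (genW b 4) := by
  rw [genW_four]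
  exact (((h 1 le_rfl (by norm_num)).mul_right (h 2 (by norm_num) (by norm_num))).mul_right
    (h 3 (by norm_num) le_rfl)).pow_right 4

end Words

namespace Gamma1

variable {g : ℕ}

theorem mk_aF (i : ℕ) : PresentedGroup.mk (mcgRels g) (aF g i) = aM g i := by
  unfold aF aM
  split_ifs <;> rfl

theorem mk_dF : PresentedGroup.mk (mcgRels g) (dF g) = dM g := rfl

theorem aM_braid {i : ℕ} (h₁ : 1 ≤ i) (h₂ : i + 1 ≤ 2 * g) :
    aM g i * aM g (i + 1) * aM g i = aM g (i + 1) * aM g i * aM g (i + 1) := by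
  have hr : aF g i * aF g (i + 1) * aF g i * (aF g (i + 1) * aF g i * aF g (i + 1))⁻¹ ∈
      mcgRels g := Or.inl ⟨i, h₁, h₂, rfl⟩
  simpa only [map_mul, mk_aF] using PresentedGroup.mk_eq_mk_of_mul_inv_mem hr

theorem commute_aM {i j : ℕ} (h₁ : 1 ≤ i) (h₂ : i + 2 ≤ j) (h₃ : j ≤ 2 * g) :
    Commute (aM g i) (aM g j) := by
  have hr : aF g i * aF g j * (aF g j * aF g i)⁻¹ ∈ mcgRels g :=
    Or.inr (Or.inl ⟨i, j, h₁, h₃, h₂, rfl⟩)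
  simpa only [commute_iff_eq, map_mul, mk_aF] using PresentedGroup.mk_eq_mk_of_mul_inv_mem hr

theorem commute_dM_aM {j : ℕ} (h₁ : 1 ≤ j) (h₂ : j ≤ 2 * g) (h₃ : j ≠ 4) :
    Commute (dM g) (aM g j) := by
  have hr : dF g * aF g j * (aF g j * dF g)⁻¹ ∈ mcgRels g :=
    Or.inr (Or.inr (Or.inr (Or.inl ⟨j, h₁, h₂, h₃, rfl⟩)))
  simpa only [commute_iff_eq, map_mul, mk_aF, mk_dF] using
    PresentedGroup.mk_eq_mk_of_mul_inv_mem hr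

theorem relation_B : dM g * (genY (aM g) 5 * dM g * (genY (aM g) 5)⁻¹) = genW (aM g) 4 := by
  have hr : dF g * dpA (dF g) (aF g) * ((aF g 1 * aF g 2 * aF g 3) ^ 4)⁻¹ ∈ mcgRels g :=
    Or.inr (Or.inr (Or.inr (Or.inr (Or.inl rfl))))
  simpa only [dpA, genY_five, genW_four, map_mul, map_inv, map_pow, mk_aF, mk_dF] using
    PresentedGroup.mk_eq_mk_of_mul_inv_mem hr

theorem commute_genY_five_genW_four (hg : 2 ≤ g) :
    Commute (genY (aM g) 5) (genW (aM g) 4) := by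
  rw [genY_five, genW_four]
  exact (commute_fullTwist_four_genY_five (aM_braid le_rfl (by omega))
    (aM_braid (by norm_num) (by omega)) (aM_braid (by norm_num) (by omega))
    (commute_aM le_rfl le_rfl (by omega)) (commute_aM le_rfl (by norm_num) (by omega))
    (commute_aM (by norm_num) le_rfl (by omega))).symm

theorem commute_aM_genW_four {k : ℕ} (h₅ : 5 ≤ k) (hk : k ≤ 2 * g) :
    Commute (aM g k) (genW (aM g) 4) :=
  Commute.genW_four_right fun _ h₁ h₂ => (commute_aM h₁ (by omega) hk).symm

theorem commute_dM_genW_four (hg : 2 ≤ g) : Commute (dM g) (genW (aM g) 4) :=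
  Commute.genW_four_right fun _ h₁ h₂ => commute_dM_aM h₁ (by omega) (by omega)

theorem genY_conj_dM (hg : 2 ≤ g) {k : ℕ} (h₅ : 5 ≤ k) (hk : k ≤ 2 * g) :
    genY (aM g) k * dM g * (genY (aM g) k)⁻¹ = (dM g)⁻¹ * genW (aM g) 4 ∧
      Commute (genY (aM g) k) (genW (aM g) 4) := by
  induction k, h₅ using Nat.le_induction with
  | base =>
    refine ⟨?_, commute_genY_five_genW_four hg⟩
    rw [← relation_B, inv_mul_cancel_left]
  | succ k h₅ ih =>
    obtain ⟨hconj, hcomm⟩ := ih (by omega)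
    have hd : Commute (aM g k) (dM g) := (commute_dM_aM (by omega) (by omega) (by omega)).symm
    have hw := commute_aM_genW_four h₅ (by omega : k ≤ 2 * g)
    rw [genY_succ _ (by omega)]
    refine ⟨?_, (hw.mul_left hcomm).mul_left hw⟩
    calc aM g k * genY (aM g) k * aM g k * dM g * (aM g k * genY (aM g) k * aM g k)⁻¹
        = aM g k * (genY (aM g) k * (aM g k * dM g * (aM g k)⁻¹) * (genY (aM g) k)⁻¹) *
            (aM g k)⁻¹ := by group
      _ = (dM g)⁻¹ * genW (aM g) 4 := by
        rw [hd.eq, mul_inv_cancel_right, hconj, (hd.inv_right.mul_right hw).eq,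
          mul_inv_cancel_right]

end Gamma1

section ProposedAction

variable (Z : ZhatModel) (F2 : F2Model) {G : Type} [Group G] [TopologicalSpace G]
  [IsProfiniteGroup G] {d u y w a : G}

open Subgroup

theorem ZhatModel.pow_mul_conj_pow_of_odd {l m : Z.R} (hl : l = 2 * m + 1)
    (hB : d * (u * d * u⁻¹) = w) (hdw : Commute d w) (huw : Commute u w) :
    Z.pow d l * (Z.pow u l * Z.pow d l * Z.pow u (-l)) = Z.pow w l := by
  have hud : u * d * u⁻¹ = d⁻¹ * w := by rw [← hB, inv_mul_cancel_left]
  have hu₂ : Commute (u * u) d := by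
    refine mul_inv_eq_iff_eq_mul.mp ?_
    calc u * u * d * (u * u)⁻¹ = u * (u * d * u⁻¹) * u⁻¹ := by group
      _ = (u * d * u⁻¹)⁻¹ * (u * w * u⁻¹) := by
          conv_lhs => rw [hud]
          group
      _ = d := by
          rw [hud, huw.eq, mul_inv_cancel_right, mul_inv_rev, inv_inv, mul_assoc, hdw.eq,
            inv_mul_cancel_left]
  have hconj : Z.pow u l * Z.pow d l * Z.pow u (-l) = Z.pow (d⁻¹ * w) l :=
    calc Z.pow u l * Z.pow d l * Z.pow u (-l)
        = u * (Z.pow (u * u) m * Z.pow d l * (Z.pow (u * u) m)⁻¹) * u⁻¹ := by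
          rw [Z.pow_neg, Z.pow_odd hl]; group
      _ = Z.pow (d⁻¹ * w) l := by
          rw [(Z.commute_pow_pow hu₂ m l).eq, mul_inv_cancel_right, Z.conj_pow, hud]
  rw [hconj, ← Z.pow_mul_of_commute ((Commute.refl d).inv_right.mul_right hdw),
    mul_inv_cancel_left]

theorem commute_pow_eval_of_conj_eq {f : F2.F}
    (hI : F2.eval f F2.x F2.y * F2.eval f F2.y F2.x = 1) (hdw : Commute d w)
    (hyw : Commute y w) (hy : y * d * y⁻¹ = d⁻¹ * w) (had : Commute a d) (haw : Commute a w)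
    (l : Z.R) :
    Commute (Z.pow d l) (F2.eval f (a ^ 2) y * Z.pow a l * F2.eval f y (a ^ 2)) := by
  set z := d⁻¹ * d⁻¹ * w with hz
  have hdz : Commute d z :=
    ((Commute.refl d).inv_right.mul_right (Commute.refl d).inv_right).mul_right hdw
  have haz : Commute a z := (had.inv_right.mul_right had.inv_right).mul_right haw
  have hyd : y * d * y⁻¹ = z * d := by
    rw [hy, hz, mul_assoc _ w, ← hdw.eq]; group
  have hyz : y * z * y⁻¹ = z⁻¹ :=
    calc y * z * y⁻¹ = (y * d * y⁻¹)⁻¹ * (y * d * y⁻¹)⁻¹ * (y * w * y⁻¹) := by rw [hz]; group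
      _ = z⁻¹ * d⁻¹ * (z⁻¹ * d⁻¹) * w := by
          rw [hyd, hyw.eq, mul_inv_cancel_right, mul_inv_rev, hdz.inv_inv.eq]
      _ = z⁻¹ := by rw [mul_assoc z⁻¹ d⁻¹, ← mul_assoc d⁻¹, hdz.inv_inv.eq, hz]; group
  set K := (zpowers z).topologicalClosure
  have hK : IsClosed (K : Set G) := isClosed_topologicalClosure _
  have hζ : (Z.pow z l)⁻¹ ∈ K :=
    K.inv_mem (Z.pow_mem hK (le_topologicalClosure _ (mem_zpowers z)) l)
  have hqy : Z.pow d l * y * (Z.pow d l)⁻¹ = (Z.pow z l)⁻¹ * y := by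
    have hyq : y * Z.pow d l * y⁻¹ = Z.pow z l * Z.pow d l := by
      rw [Z.conj_pow, hyd, Z.pow_mul_of_commute hdz.symm]
    calc Z.pow d l * y * (Z.pow d l)⁻¹
        = (Z.pow z l)⁻¹ * (Z.pow z l * Z.pow d l) * y * (Z.pow d l)⁻¹ := by group
      _ = (Z.pow z l)⁻¹ * y := by rw [← hyq]; group
  have hKa : ∀ k ∈ K, Commute k (Z.pow a l) := fun k hk =>
    (Z.commute_pow_left (mem_centralizer_singleton_iff.mp (topologicalClosure_minimal _
      (zpowers_le.mpr (mem_centralizer_singleton_iff.mpr haz.symm.eq))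
      (Set.isClosed_centralizer _) hk)).symm l).symm
  have ha₂ : a ^ 2 ∈ normalizer (K : Set G) := mem_normalizer_topologicalClosure_zpowers
    (by rw [(haz.pow_left 2).eq, mul_inv_cancel_right])
  have hyK : y ∈ normalizer (K : Set G) :=
    mem_normalizer_topologicalClosure_zpowers (by rw [hyz, zpowers_inv])
  rw [F2.eval_swap_of_mul_eq_one hI (a ^ 2) y]
  exact F2.commute_conj_eval hK ha₂ hyK hζ ((Z.commute_pow_left had.symm l).pow_right 2) hqy
    (Z.commute_pow_pow had.symm l l) hKa f

end ProposedAction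

/-- Corollary 4.5: the proposed action of `F = (λ, f) ∈ GT` respects relation (B),
`d^λ (y₅^λ d^λ y₅^{-λ}) = w₄^λ`, and the commutation of `d` with `a_j` for `j ≠ 4`. -/
theorem proposed_action_respects_relation_B_and_commutations
    (g : ℕ) (hg : 2 ≤ g) (Z : ZhatModel) (F2 : F2Model)
    (l : Z.R) (f : F2.F) (hGT : IsGT Z F2 l f)
    (M : ProfiniteCompletionModel (Gamma1 g)) :
    (Z.pow (M.ι (dM g)) l *
        (Z.pow (M.ι (genY (aM g) 5)) l * Z.pow (M.ι (dM g)) l *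
          Z.pow (M.ι (genY (aM g) 5)) (-l)) =
      Z.pow (M.ι (genW (aM g) 4)) l) ∧
    Commute (Z.pow (M.ι (dM g)) l) (Z.pow (M.ι (aM g 1)) l) ∧
    (∀ j : ℕ, 2 ≤ j → j ≤ 2*g → j ≠ 4 →
      Commute (Z.pow (M.ι (dM g)) l)
        (F2.eval f (M.ι (aM g j) ^ 2) (M.ι (genY (aM g) j)) *
          Z.pow (M.ι (aM g j)) l *
          F2.eval f (M.ι (genY (aM g) j)) (M.ι (aM g j) ^ 2))) := by
  obtain ⟨-, ⟨m, hm⟩, -, hI, -, -⟩ := hGT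
  have hdw := (Gamma1.commute_dM_genW_four hg).map M.ι
  have hda {j : ℕ} (h₁ : 1 ≤ j) (h₂ : j ≤ 2 * g) (h₄ : j ≠ 4) :
      Commute (M.ι (dM g)) (M.ι (aM g j)) :=
    (Gamma1.commute_dM_aM h₁ h₂ h₄).map M.ι
  refine ⟨?_, Z.commute_pow_pow (hda le_rfl (by omega) (by norm_num)) l l,
    fun j hj₂ hj hj₄ => ?_⟩
  · exact Z.pow_mul_conj_pow_of_odd (by rw [← hm]; ring)
      (by simpa only [map_mul, map_inv] using congrArg M.ι Gamma1.relation_B) hdw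
      ((Gamma1.commute_genY_five_genW_four hg).map M.ι)
  rcases Nat.lt_or_ge j 5 with hj₅ | hj₅
  · have ha := hda (by omega) hj hj₄
    have hy : Commute (M.ι (dM g)) (M.ι (genY (aM g) j)) :=
      (Commute.genY_right fun _ h₁ h₂ => Gamma1.commute_dM_aM h₁ (by omega) (by omega)).map M.ι
    exact Z.commute_pow_left (((F2.commute_eval (ha.pow_right 2) hy f).mul_right
      (Z.commute_pow_left ha.symm l).symm).mul_right (F2.commute_eval hy (ha.pow_right 2) f)) l
  · obtain ⟨hconj, hcomm⟩ := Gamma1.genY_conj_dM hg hj₅ hj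
    exact commute_pow_eval_of_conj_eq Z F2 hI hdw (hcomm.map M.ι)
      (by simpa only [map_mul, map_inv] using congrArg M.ι hconj) (hda (by omega) hj hj₄).symm
      ((Gamma1.commute_aM_genW_four hj₅ hj).map M.ι) l
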